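/- Let σ² > 0, c ≥ 0, and let L, L': ℝ^d → ℝ be measurable functions such that e^{−L/σ²} and e^{−L'/σ²} are integrable and |L(θ) − L'(θ)| ≤ c for all θ ∈ ℝ^d. Let ν and ν' be the Gibbs probability measures with densities proportional to e^{−L/σ²} and e^{−L'/σ²} respectively. Then for every q > 1, R_q(ν ‖ ν') ≤ 2c/σ². -/

import Mathlib

/-!
The density of `ν` with respect to `ν'` is `(Z'/Z) e^{(L' − L)/σ²}`, where `Z, Z'` are the
partition functions. The bound `L − L' ≤ c` gives `Z' ≤ e^{c/σ²} Z` and `L' − L ≤ c` bounds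
the exponential by `e^{c/σ²}`, so the density is at most `M = e^{2c/σ²}`. Whenever
`dν/dν' ≤ M`, we have `∫ (dν/dν')^q dν' ≤ M^{q−1} ∫ dν/dν' dν' = M^{q−1}`, i.e.
`R_q(ν‖ν') ≤ log M`.
-/

open MeasureTheory
open scoped ENNReal

/-- Rényi divergence of order `q` of `μ` with respect to `ν`. -/
noncomputable def renyiDiv {α : Type*} [MeasurableSpace α] (q : ℝ) (μ ν : Measure α) : ℝ :=
  (q - 1)⁻¹ * Real.log (∫ x, ((μ.rnDeriv ν x).toReal) ^ q ∂ν)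

/-- The Gibbs probability measure on `ℝ^d` with potential `L` and noise parameter `σ²`:
density `e^{−L(θ)/σ²} / ∫ e^{−L/σ²} dθ` with respect to Lebesgue measure. -/
noncomputable def gibbs {d : ℕ} (σ2 : ℝ) (L : EuclideanSpace ℝ (Fin d) → ℝ) :
    Measure (EuclideanSpace ℝ (Fin d)) :=
  (ENNReal.ofReal (∫ θ, Real.exp (-(L θ) / σ2)))⁻¹ •
    volume.withDensity (fun θ => ENNReal.ofReal (Real.exp (-(L θ) / σ2)))

section RenyiBound

variable {α : Type*} [MeasurableSpace α] {μ ν : Measure α} {q M : ℝ}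

lemma integral_toReal_rnDeriv_rpow_le [IsFiniteMeasure μ] [SigmaFinite ν] (hμν : μ ≪ ν)
    (hq : 1 ≤ q) (hM : ∀ᵐ x ∂ν, (μ.rnDeriv ν x).toReal ≤ M) :
    ∫ x, (μ.rnDeriv ν x).toReal ^ q ∂ν ≤ M ^ (q - 1) * μ.real Set.univ := by
  have hpow : ∀ᵐ x ∂ν,
      (μ.rnDeriv ν x).toReal ^ q ≤ M ^ (q - 1) * (μ.rnDeriv ν x).toReal := by
    filter_upwards [hM] with x hx
    calc (μ.rnDeriv ν x).toReal ^ q = (μ.rnDeriv ν x).toReal ^ (q - 1 + 1) := by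
          rw [sub_add_cancel]
      _ = (μ.rnDeriv ν x).toReal ^ (q - 1) * (μ.rnDeriv ν x).toReal :=
        Real.rpow_add_one' ENNReal.toReal_nonneg (by linarith)
      _ ≤ M ^ (q - 1) * (μ.rnDeriv ν x).toReal := by gcongr
  calc ∫ x, (μ.rnDeriv ν x).toReal ^ q ∂ν
      ≤ ∫ x, M ^ (q - 1) * (μ.rnDeriv ν x).toReal ∂ν :=
        integral_mono_of_nonneg (.of_forall fun _ => by positivity)
          (Measure.integrable_toReal_rnDeriv.const_mul _) hpow
    _ = M ^ (q - 1) * μ.real Set.univ := by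
        rw [integral_const_mul, Measure.integral_toReal_rnDeriv hμν]

lemma renyiDiv_le_log_of_toReal_rnDeriv_le [IsProbabilityMeasure μ] [IsProbabilityMeasure ν]
    (hμν : μ ≪ ν) (hq : 1 < q) (hM : ∀ᵐ x ∂ν, (μ.rnDeriv ν x).toReal ≤ M) :
    renyiDiv q μ ν ≤ Real.log M := by
  -- for the case `∫ (dμ/dν)^q dν = 0`, where `Real.log` takes the junk value `0`
  have hM1 : 1 ≤ M :=
    calc 1 = ∫ x, (μ.rnDeriv ν x).toReal ∂ν := by
          rw [Measure.integral_toReal_rnDeriv hμν, probReal_univ]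
      _ ≤ ∫ _, M ∂ν :=
          integral_mono_ae Measure.integrable_toReal_rnDeriv (integrable_const M) hM
      _ = M := by simp
  have hI := integral_toReal_rnDeriv_rpow_le hμν hq.le hM
  rw [probReal_univ, mul_one] at hI
  rw [renyiDiv, inv_mul_le_iff₀ (sub_pos.2 hq), ← Real.log_rpow (by linarith)]
  rcases (integral_nonneg fun x => Real.rpow_nonneg ENNReal.toReal_nonneg q :
      0 ≤ ∫ x, (μ.rnDeriv ν x).toReal ^ q ∂ν).eq_or_lt with hzero | hpos
  · rw [← hzero, Real.log_zero]
    exact Real.log_nonneg (Real.one_le_rpow hM1 (by linarith))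
  · exact Real.log_le_log hpos hI

end RenyiBound

noncomputable def partitionFunction {d : ℕ} (σ2 : ℝ) (L : EuclideanSpace ℝ (Fin d) → ℝ) :
    ℝ :=
  ∫ θ, Real.exp (-(L θ) / σ2)

noncomputable def gibbsDensityRatio {d : ℕ} (σ2 : ℝ)
    (L L' : EuclideanSpace ℝ (Fin d) → ℝ) (θ : EuclideanSpace ℝ (Fin d)) : ℝ :=
  partitionFunction σ2 L' / partitionFunction σ2 L * Real.exp ((L' θ - L θ) / σ2)

section Gibbs

variable {d : ℕ} {σ2 c : ℝ} {L L' : EuclideanSpace ℝ (Fin d) → ℝ}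

lemma partitionFunction_pos (hL : Integrable (fun θ => Real.exp (-(L θ) / σ2))) :
    0 < partitionFunction σ2 L :=
  integral_exp_pos hL

lemma gibbs_eq_smul_withDensity : gibbs σ2 L = (ENNReal.ofReal (partitionFunction σ2 L))⁻¹ •
    volume.withDensity (fun θ => ENNReal.ofReal (Real.exp (-(L θ) / σ2))) :=
  rfl

lemma isProbabilityMeasure_gibbs (hL : Integrable (fun θ => Real.exp (-(L θ) / σ2))) :
    IsProbabilityMeasure (gibbs σ2 L) := by
  constructor
  rw [gibbs_eq_smul_withDensity, Measure.smul_apply, withDensity_apply _ MeasurableSet.univ,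
    Measure.restrict_univ, smul_eq_mul,
    ← ofReal_integral_eq_lintegral_ofReal hL (.of_forall fun _ => Real.exp_nonneg _)]
  exact ENNReal.inv_mul_cancel (ENNReal.ofReal_pos.2 (partitionFunction_pos hL)).ne'
    ENNReal.ofReal_ne_top

lemma measurable_gibbsDensityRatio (hLmeas : Measurable L) (hL'meas : Measurable L') :
    Measurable (gibbsDensityRatio σ2 L L') := by
  unfold gibbsDensityRatio
  fun_prop

lemma gibbsDensityRatio_nonneg (hL : Integrable (fun θ => Real.exp (-(L θ) / σ2)))
    (hL' : Integrable (fun θ => Real.exp (-(L' θ) / σ2))) (θ : EuclideanSpace ℝ (Fin d)) :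
    0 ≤ gibbsDensityRatio σ2 L L' θ :=
  mul_nonneg (div_nonneg (partitionFunction_pos hL').le (partitionFunction_pos hL).le)
    (Real.exp_nonneg _)

lemma gibbs_eq_withDensity_gibbs (hLmeas : Measurable L) (hL'meas : Measurable L')
    (hL : Integrable (fun θ => Real.exp (-(L θ) / σ2)))
    (hL' : Integrable (fun θ => Real.exp (-(L' θ) / σ2))) :
    gibbs σ2 L =
      (gibbs σ2 L').withDensity fun θ => ENNReal.ofReal (gibbsDensityRatio σ2 L L' θ) := by
  have hZ := partitionFunction_pos hL
  have hZ' := partitionFunction_pos hL'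
  have hdensity : ((fun θ => ENNReal.ofReal (Real.exp (-(L' θ) / σ2))) *
      fun θ => ENNReal.ofReal (gibbsDensityRatio σ2 L L' θ)) =
      ENNReal.ofReal (partitionFunction σ2 L' / partitionFunction σ2 L) •
        fun θ => ENNReal.ofReal (Real.exp (-(L θ) / σ2)) := by
    funext θ
    simp only [Pi.mul_apply, Pi.smul_apply, smul_eq_mul, gibbsDensityRatio]
    rw [← ENNReal.ofReal_mul (Real.exp_nonneg _), ← ENNReal.ofReal_mul (by positivity),
      mul_left_comm, ← Real.exp_add]
    ring_nf
  rw [gibbs_eq_smul_withDensity, gibbs_eq_smul_withDensity, withDensity_smul_measure,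
    ← withDensity_mul _ (by fun_prop)
      (measurable_gibbsDensityRatio hLmeas hL'meas).ennreal_ofReal,
    hdensity, withDensity_smul _ (by fun_prop), smul_smul, div_eq_mul_inv,
    ENNReal.ofReal_mul hZ'.le, ENNReal.ofReal_inv_of_pos hZ, ← mul_assoc,
    ENNReal.inv_mul_cancel (ENNReal.ofReal_pos.2 hZ').ne' ENNReal.ofReal_ne_top, one_mul]

lemma partitionFunction_le_exp_mul (hσ2 : 0 < σ2)
    (hL : Integrable (fun θ => Real.exp (-(L θ) / σ2)))
    (hL' : Integrable (fun θ => Real.exp (-(L' θ) / σ2))) (hLL' : ∀ θ, L θ - L' θ ≤ c) :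
    partitionFunction σ2 L' ≤ Real.exp (c / σ2) * partitionFunction σ2 L := by
  rw [partitionFunction, partitionFunction, ← integral_const_mul]
  refine integral_mono hL' (hL.const_mul _) fun θ => ?_
  rw [← Real.exp_add, ← add_div]
  gcongr
  linarith [hLL' θ]

lemma gibbsDensityRatio_le (hσ2 : 0 < σ2)
    (hL : Integrable (fun θ => Real.exp (-(L θ) / σ2)))
    (hL' : Integrable (fun θ => Real.exp (-(L' θ) / σ2))) (hbound : ∀ θ, |L θ - L' θ| ≤ c)
    (θ : EuclideanSpace ℝ (Fin d)) :
    gibbsDensityRatio σ2 L L' θ ≤ Real.exp (2 * c / σ2) := by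
  have hratio : partitionFunction σ2 L' / partitionFunction σ2 L ≤ Real.exp (c / σ2) :=
    (div_le_iff₀ (partitionFunction_pos hL)).2
      (partitionFunction_le_exp_mul hσ2 hL hL' fun θ => (abs_le.1 (hbound θ)).2)
  calc gibbsDensityRatio σ2 L L' θ ≤ Real.exp (c / σ2) * Real.exp (c / σ2) := by
        unfold gibbsDensityRatio
        gcongr
        linarith [(abs_le.1 (hbound θ)).1]
    _ = Real.exp (2 * c / σ2) := by rw [← Real.exp_add]; ring_nf

lemma toReal_rnDeriv_gibbs_le (hσ2 : 0 < σ2) (hLmeas : Measurable L) (hL'meas : Measurable L')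
    (hL : Integrable (fun θ => Real.exp (-(L θ) / σ2)))
    (hL' : Integrable (fun θ => Real.exp (-(L' θ) / σ2))) (hbound : ∀ θ, |L θ - L' θ| ≤ c) :
    ∀ᵐ θ ∂gibbs σ2 L',
      ((gibbs σ2 L).rnDeriv (gibbs σ2 L') θ).toReal ≤ Real.exp (2 * c / σ2) := by
  have := isProbabilityMeasure_gibbs hL'
  rw [gibbs_eq_withDensity_gibbs hLmeas hL'meas hL hL']
  filter_upwards [Measure.rnDeriv_withDensity (gibbs σ2 L')
    (measurable_gibbsDensityRatio hLmeas hL'meas).ennreal_ofReal] with θ hθ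
  rw [hθ, ENNReal.toReal_ofReal (gibbsDensityRatio_nonneg hL hL' θ)]
  exact gibbsDensityRatio_le hσ2 hL hL' hbound θ

end Gibbs

theorem renyiDiv_gibbs_le_of_bounded_perturbation_general {d : ℕ} {σ2 c : ℝ}
    (hσ2 : 0 < σ2)
    (L L' : EuclideanSpace ℝ (Fin d) → ℝ)
    (hLmeas : Measurable L) (hL'meas : Measurable L')
    (hLint : Integrable (fun θ => Real.exp (-(L θ) / σ2)))
    (hL'int : Integrable (fun θ => Real.exp (-(L' θ) / σ2)))
    (hbound : ∀ θ, |L θ - L' θ| ≤ c) :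
    ∀ q : ℝ, 1 < q → renyiDiv q (gibbs σ2 L) (gibbs σ2 L') ≤ 2 * c / σ2 := by
  intro q hq
  have := isProbabilityMeasure_gibbs hLint
  have := isProbabilityMeasure_gibbs hL'int
  have hac : gibbs σ2 L ≪ gibbs σ2 L' := by
    rw [gibbs_eq_withDensity_gibbs hLmeas hL'meas hLint hL'int]
    exact withDensity_absolutelyContinuous _ _
  calc renyiDiv q (gibbs σ2 L) (gibbs σ2 L') ≤ Real.log (Real.exp (2 * c / σ2)) :=
        renyiDiv_le_log_of_toReal_rnDeriv_le hac hq
          (toReal_rnDeriv_gibbs_le hσ2 hLmeas hL'meas hLint hL'int hbound)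
    _ = 2 * c / σ2 := Real.log_exp _

/-- **Indistinguishability of Gibbs measures under bounded perturbations.** If the
potentials `L, L'` satisfy `|L(θ) − L'(θ)| ≤ c` everywhere, then the corresponding Gibbs
measures `ν ∝ e^{−L/σ²}` and `ν' ∝ e^{−L'/σ²}` satisfy `R_q(ν‖ν') ≤ 2c/σ²` for every
`q > 1`. -/
theorem renyiDiv_gibbs_le_of_bounded_perturbation {d : ℕ} {σ2 c : ℝ}
    (hσ2 : 0 < σ2) (hc : 0 ≤ c)
    (L L' : EuclideanSpace ℝ (Fin d) → ℝ)
    (hLmeas : Measurable L) (hL'meas : Measurable L')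
    (hLint : Integrable (fun θ => Real.exp (-(L θ) / σ2)))
    (hL'int : Integrable (fun θ => Real.exp (-(L' θ) / σ2)))
    (hbound : ∀ θ, |L θ - L' θ| ≤ c) :
    ∀ q : ℝ, 1 < q → renyiDiv q (gibbs σ2 L) (gibbs σ2 L') ≤ 2 * c / σ2 :=
  renyiDiv_gibbs_le_of_bounded_perturbation_general hσ2 L L' hLmeas hL'meas hLint hL'int hbound
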